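/- Suppose φ : Ω → ℝ is continuous and has the extensibility property. Then for any pair ξ, η ∈ Ω such that the set {k ∈ ℤ : ξ_k ≠ η_k} is finite, the sequence ρ_n(ξ, η) = Σ_{i=−n}^{n} [φ(S^i ξ) − φ(S^i η)], n ≥ 0, converges as n → ∞. -/

import Mathlib

/-!
By the cocycle identity `ρ_n(ξ, η) = ρ_n(ξ, ζ) + ρ_n(ζ, η)` it suffices to treat `η` changed at a
single site `k`. Shifting by `k` turns `ρ_n` of that pair into the sum over the window
`[-n - k, n - k]` of the terms `φ(S^j ω^b) - φ(S^j ω)` with `ω = S^k η`, whose sums over the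
centred windows `[-n, n]` converge by extensibility. Since `φ` is uniformly continuous on the
compact space `Ω`, these terms tend to `0` as `|j| → ∞`, so shifting the window by a fixed amount
does not change the limit.
-/

open Filter Topology MeasureTheory

namespace GP

/-- The configuration space `Ω = E^ℤ`. -/
abbrev Conf (E : Type*) := ℤ → E

variable {E : Type*}

/-- The shift by `i`: `(shiftZ i ω) k = ω (k + i)`.  The left shift `S` is `shiftZ 1`. -/
def shiftZ (i : ℤ) (ω : Conf E) : Conf E := fun k => ω (k + i)

/-- The cylinder set determined by a word `w ∈ E^n` (placed on coordinates `0,…,n-1`). -/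
def cylW {n : ℕ} (w : Fin n → E) : Set (Conf E) := {ω | ∀ j : Fin n, ω ((j : ℕ) : ℤ) = w j}

/-- The cylinder set `[ω_0^{n-1}]`. -/
def cylPt (ω : Conf E) (n : ℕ) : Set (Conf E) :=
  {ω' | ∀ j : ℕ, j < n → ω' (j : ℤ) = ω (j : ℤ)}

/-- Birkhoff sum `S_n φ = ∑_{k=0}^{n-1} φ ∘ S^k`. -/
def birk (φ : Conf E → ℝ) (n : ℕ) (ω : Conf E) : ℝ :=
  ∑ k ∈ Finset.range n, φ (shiftZ (k : ℤ) ω)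

/-- Topological pressure of `φ` on the full shift:
`P(φ) = lim_n (1/n) log ∑_{w ∈ E^n} sup_{ω ∈ [w]} exp (S_n φ (ω))`
(the limit exists; we use `limsup` as the defining expression). -/
noncomputable def press [Fintype E] (φ : Conf E → ℝ) : ℝ :=
  Filter.limsup (fun n : ℕ =>
    Real.log (∑ w : Fin n → E, sSup ((fun ω => Real.exp (birk φ n ω)) '' cylW w)) / n) atTop

/-- Kolmogorov–Sinai entropy of a shift-invariant measure on the full shift,
computed along the canonical generating partition into cylinders
(the limit exists; we use `limsup` as the defining expression). -/
noncomputable def ent [Fintype E] [MeasurableSpace E] (μ : Measure (Conf E)) : ℝ :=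
  Filter.limsup (fun n : ℕ =>
    (- ∑ w : Fin n → E, ((μ (cylW w)).toReal * Real.log (μ (cylW w)).toReal)) / n) atTop

/-- Shift invariance of a measure. -/
def ShiftInv [MeasurableSpace E] (μ : Measure (Conf E)) : Prop :=
  Measure.map (shiftZ 1) μ = μ

/-- `μ` is an equilibrium state for `φ`: `μ` is a shift-invariant Borel probability
measure with `h(μ) + ∫ φ dμ = P(φ)`. -/
def IsEquilibrium [Fintype E] [MeasurableSpace E] (φ : Conf E → ℝ)
    (μ : Measure (Conf E)) : Prop :=
  IsProbabilityMeasure μ ∧ ShiftInv μ ∧ ent μ + ∫ ω, φ ω ∂μ = press φ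

/-- `ω^c`: the configuration equal to `c` at site `0` and to `ω` elsewhere. -/
def upd0 (ω : Conf E) (c : E) : Conf E := Function.update ω 0 c

/-- Partial sums `ρ_n(ξ,η) = ∑_{i=-n}^{n} (φ(S^i ξ) - φ(S^i η))`. -/
noncomputable def rhoN (φ : Conf E → ℝ) (ξ η : Conf E) (n : ℕ) : ℝ :=
  ∑ i ∈ Finset.Icc (-(n : ℤ)) (n : ℤ), (φ (shiftZ i ξ) - φ (shiftZ i η))

/-- `φ` has the extensibility property: for all `a b ∈ E`, the functions
`ω ↦ ∑_{i=-n}^{n} (φ(S^i(ω^b)) - φ(S^i(ω^a)))` converge uniformly as `n → ∞`. -/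
def Extensible (φ : Conf E → ℝ) : Prop :=
  ∀ a b : E, ∃ r : Conf E → ℝ,
    TendstoUniformly (fun n ω => rhoN φ (upd0 ω b) (upd0 ω a) n) r atTop

/-- The cocycle `ρ^φ(ξ,η) = lim_n ∑_{i=-n}^{n} (φ(S^i ξ) - φ(S^i η))`. -/
noncomputable def rho (φ : Conf E → ℝ) (ξ η : Conf E) : ℝ :=
  limUnder atTop (rhoN φ ξ η)

/-- `ξ` and `η` differ in at most finitely many coordinates. -/
def FinDiff (ξ η : Conf E) : Prop := {k : ℤ | ξ k ≠ η k}.Finite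

/-- `ovr Λ ξ ω` is the configuration `ξ_Λ ω_{ℤ∖Λ}`, equal to `ξ` on `Λ` and to `ω` off `Λ`. -/
def ovr (Λ : Finset ℤ) (ξ : {k // k ∈ Λ} → E) (ω : Conf E) : Conf E :=
  fun k => if h : k ∈ Λ then ξ ⟨k, h⟩ else ω k

/-- `γ` is a specification: each `γ_Λ(·|ω_{Λ^c})` is a probability distribution on `E^Λ`,
and the family is consistent (`γ_Λ = γ_Λ ∘ γ_V` for `V ⊆ Λ`); here `γ Λ ω` denotes
`γ_Λ(ω_Λ | ω_{Λ^c})`. -/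
def IsSpecification [Fintype E] (γ : Finset ℤ → Conf E → ℝ) : Prop :=
  (∀ (Λ : Finset ℤ) (ω : Conf E), 0 ≤ γ Λ ω) ∧
  (∀ (Λ : Finset ℤ) (ω : Conf E), ∑ ξ : {k // k ∈ Λ} → E, γ Λ (ovr Λ ξ ω) = 1) ∧
  (∀ V Λ : Finset ℤ, V ⊆ Λ → ∀ ω : Conf E,
     γ Λ ω = (∑ η : {k // k ∈ V} → E, γ Λ (ovr V η ω)) * γ V ω)

/-- Non-nullness: `inf_ω γ_Λ(ω_Λ|ω_{Λ^c}) > 0` for every finite `Λ`. -/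
def NonNull (γ : Finset ℤ → Conf E → ℝ) : Prop :=
  ∀ Λ : Finset ℤ, ∃ c > (0 : ℝ), ∀ ω : Conf E, c ≤ γ Λ ω

/-- Continuity (quasilocality): `ω ↦ γ_Λ(ω_Λ|ω_{Λ^c})` is continuous for every finite `Λ`. -/
def ContSpec [TopologicalSpace E] (γ : Finset ℤ → Conf E → ℝ) : Prop :=
  ∀ Λ : Finset ℤ, Continuous (γ Λ)

/-- A Gibbsian specification: a non-null continuous specification. -/
def IsGibbsSpec [Fintype E] [TopologicalSpace E] (γ : Finset ℤ → Conf E → ℝ) : Prop :=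
  IsSpecification γ ∧ NonNull γ ∧ ContSpec γ

/-- Translation invariance of a specification: `γ_{Λ+1} = γ_Λ ∘ S`. -/
def SpecTI (γ : Finset ℤ → Conf E → ℝ) : Prop :=
  ∀ (Λ : Finset ℤ) (ω : Conf E), γ (Λ.image (· + 1)) ω = γ Λ (shiftZ 1 ω)

/-- `μ` is a DLR-Gibbs measure for the specification `γ`: `μ` is a Borel probability
measure satisfying the DLR equations `∫ γ_Λ(f|·) dμ = ∫ f dμ` for every finite `Λ`
and every continuous `f` (equivalently, each `γ_Λ` is a version of the conditional
probabilities of `μ`). -/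
def IsDLRGibbs [Fintype E] [MeasurableSpace E] [TopologicalSpace E]
    (γ : Finset ℤ → Conf E → ℝ) (μ : Measure (Conf E)) : Prop :=
  IsProbabilityMeasure μ ∧
  ∀ (Λ : Finset ℤ) (f : Conf E → ℝ), Continuous f →
    ∫ ω, (∑ ξ : {k // k ∈ Λ} → E, γ Λ (ovr Λ ξ ω) * f (ovr Λ ξ ω)) ∂μ = ∫ ω, f ω ∂μ

/-- The specification `γ^φ` associated with an extensible potential `φ`:
`γ^φ_Λ(ω_Λ|ω_{Λ^c}) = (∑_{ξ_Λ ∈ E^Λ} exp ρ^φ(ξ_Λ ω_{ℤ∖Λ}, ω))⁻¹`. -/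
noncomputable def specOf [Fintype E] (φ : Conf E → ℝ) : Finset ℤ → Conf E → ℝ :=
  fun Λ ω => (∑ ξ : {k // k ∈ Λ} → E, Real.exp (rho φ (ovr Λ ξ ω) ω))⁻¹

/-- The configuration `𝐚_{-∞}^{-1} b ω_1^{∞}`: equal to `a` at all negative
coordinates, to `b` at coordinate `0`, and to `ω` at positive coordinates. -/
def bca (a : E) (ω : Conf E) (b : E) : Conf E :=
  fun k => if k < 0 then a else if k = 0 then b else ω k

/-- The potential associated with a specification:
`φ_γ(ω) = log (γ_{{0}}(ω_0 | 𝐚_{-∞}^{-1} ω_1^{∞}) / γ_{{0}}(a | 𝐚_{-∞}^{-1} ω_1^{∞}))`. -/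
noncomputable def phiOf (γ : Finset ℤ → Conf E → ℝ) (a : E) (ω : Conf E) : ℝ :=
  Real.log (γ ({0} : Finset ℤ) (bca a ω (ω 0)) / γ ({0} : Finset ℤ) (bca a ω a))

/-- `μ` is weak Bowen-Gibbs for `φ` with constant `P`. -/
def WeakBowenGibbs [MeasurableSpace E] (μ : Measure (Conf E)) (φ : Conf E → ℝ)
    (P : ℝ) : Prop :=
  ∃ C : ℕ → ℝ, (∀ n, 0 < C n) ∧
    Tendsto (fun n : ℕ => Real.log (C n) / n) atTop (𝓝 0) ∧
    ∀ (n : ℕ) (ω : Conf E),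
      (C n)⁻¹ ≤ (μ (cylPt ω n)).toReal / Real.exp (birk φ n ω - n * P) ∧
      (μ (cylPt ω n)).toReal / Real.exp (birk φ n ω - n * P) ≤ C n

theorem sum_Icc_add_one_add_one {M : Type*} [AddCommGroup M] (g : ℤ → M) {a b : ℤ}
    (h : a ≤ b + 1) :
    ∑ i ∈ Finset.Icc (a + 1) (b + 1), g i = ∑ i ∈ Finset.Icc a b, g i + g (b + 1) - g a := by
  have hright := Finset.sum_insert (f := g) (show b + 1 ∉ Finset.Icc a b by simp)
  have hleft := Finset.sum_insert (f := g) (show a ∉ Finset.Icc (a + 1) (b + 1) by simp)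
  rw [Finset.insert_Icc_right_eq_Icc_add_one h] at hright
  rw [Finset.insert_Icc_add_one_left_eq_Icc h, hright] at hleft
  rw [eq_sub_iff_add_eq, add_comm _ (g a), ← hleft, add_comm]

/-- Moving the window by one changes the sum by two terms, both tending to `0`. -/
theorem tendsto_sum_Icc_add {M : Type*} [AddCommGroup M] [TopologicalSpace M]
    [IsTopologicalAddGroup M] {g : ℤ → M} (hg : Tendsto g cofinite (𝓝 0)) {L : M}
    (hL : Tendsto (fun n : ℕ => ∑ i ∈ Finset.Icc (-n : ℤ) n, g i) atTop (𝓝 L)) (k : ℤ) :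
    Tendsto (fun n : ℕ => ∑ i ∈ Finset.Icc (-n + k) (n + k), g i) atTop (𝓝 L) := by
  have hup : ∀ c : ℤ, Tendsto (fun n : ℕ => g (n + c)) atTop (𝓝 0) := fun c => by
    rw [← Nat.cofinite_eq_atTop]
    exact hg.comp (Function.Injective.tendsto_cofinite fun m n hmn => by simpa using hmn)
  have hdown : ∀ c : ℤ, Tendsto (fun n : ℕ => g (-n + c)) atTop (𝓝 0) := fun c => by
    rw [← Nat.cofinite_eq_atTop]
    exact hg.comp (Function.Injective.tendsto_cofinite fun m n hmn => by simpa using hmn)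
  have hsucc : ∀ k : ℤ,
      Tendsto (fun n : ℕ => ∑ i ∈ Finset.Icc (-n + k) (n + k), g i) atTop (𝓝 L) →
      Tendsto (fun n : ℕ => ∑ i ∈ Finset.Icc (-n + (k + 1)) (n + (k + 1)), g i) atTop (𝓝 L) := by
    intro k hk
    have := (hk.add (hup (k + 1))).sub (hdown k)
    rw [add_zero, sub_zero] at this
    refine this.congr fun n => ?_
    rw [← add_assoc, ← add_assoc, sum_Icc_add_one_add_one g (by omega), add_assoc (n : ℤ)]
  have hpred : ∀ k : ℤ,
      Tendsto (fun n : ℕ => ∑ i ∈ Finset.Icc (-n + k) (n + k), g i) atTop (𝓝 L) →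
      Tendsto (fun n : ℕ => ∑ i ∈ Finset.Icc (-n + (k - 1)) (n + (k - 1)), g i) atTop (𝓝 L) := by
    intro k hk
    have := (hk.sub (hup k)).add (hdown (k - 1))
    rw [sub_zero, add_zero] at this
    refine this.congr fun n => ?_
    have hshift := sum_Icc_add_one_add_one g (a := -n + (k - 1)) (b := n + (k - 1)) (by omega)
    rw [show -(n : ℤ) + (k - 1) + 1 = -n + k by ring, show (n : ℤ) + (k - 1) + 1 = n + k by ring]
      at hshift
    rw [hshift]
    abel
  induction k using Int.induction_on with
  | zero => simpa using hL
  | succ k ih => exact hsucc _ ih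
  | pred k ih => exact hpred _ ih

theorem exists_finset_forall_dist_lt {ι Y : Type*} {X : ι → Type*} [∀ i, TopologicalSpace (X i)]
    [∀ i, DiscreteTopology (X i)] [CompactSpace (∀ i, X i)] [PseudoMetricSpace Y]
    {f : (∀ i, X i) → Y} (hf : Continuous f) {ε : ℝ} (hε : 0 < ε) :
    ∃ S : Finset ι, ∀ x y, (∀ i ∈ S, x i = y i) → dist (f x) (f y) < ε := by
  classical
  have hcyl : ∀ x, ∃ S : Finset ι, ∀ y, (∀ i ∈ S, y i = x i) → dist (f y) (f x) < ε / 2 := by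
    intro x
    have := hf.continuousAt (x := x) (Metric.ball_mem_nhds _ (half_pos hε))
    rw [Filter.mem_map, nhds_pi, Filter.mem_pi'] at this
    obtain ⟨S, t, ht, hsub⟩ := this
    exact ⟨S, fun y hy => hsub fun i hi => hy i hi ▸ mem_of_mem_nhds (ht i)⟩
  choose S hS using hcyl
  have hopen : ∀ x, IsOpen {y : ∀ i, X i | ∀ i ∈ S x, y i = x i} := fun x => by
    simpa [Set.pi] using
      isOpen_set_pi (S x).finite_toSet fun i _ => isOpen_discrete ({x i} : Set (X i))
  obtain ⟨t, ht⟩ := CompactSpace.elim_nhds_subcover _ fun x => (hopen x).mem_nhds fun i _ => rfl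
  refine ⟨t.biUnion S, fun x y hxy => ?_⟩
  obtain ⟨z, hz, hxz⟩ : ∃ z ∈ t, ∀ i ∈ S z, x i = z i := by
    simpa using ht.symm.subset (Set.mem_univ x)
  have hyz : ∀ i ∈ S z, y i = z i := fun i hi =>
    (hxy i (Finset.mem_biUnion.2 ⟨z, hz, hi⟩)).symm.trans (hxz i hi)
  calc dist (f x) (f y) ≤ dist (f x) (f z) + dist (f y) (f z) := dist_triangle_right _ _ _
    _ < ε / 2 + ε / 2 := add_lt_add (hS z x hxz) (hS z y hyz)
    _ = ε := add_halves ε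

theorem shiftZ_shiftZ (i j : ℤ) (ω : Conf E) : shiftZ i (shiftZ j ω) = shiftZ (i + j) ω := by
  funext m
  simp only [shiftZ, add_assoc]

@[simp]
theorem shiftZ_zero (ω : Conf E) : shiftZ 0 ω = ω := by
  funext m
  simp only [shiftZ, add_zero]

theorem shiftZ_update (i k : ℤ) (c : E) (ω : Conf E) :
    shiftZ i (Function.update ω k c) = Function.update (shiftZ i ω) (k - i) c := by
  funext m
  simp only [shiftZ, Function.update_apply, eq_sub_iff_add_eq]

theorem rhoN_shiftZ (φ : Conf E → ℝ) (ξ η : Conf E) (k : ℤ) (n : ℕ) :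
    rhoN φ (shiftZ k ξ) (shiftZ k η) n =
      ∑ i ∈ Finset.Icc (-n + k) (n + k), (φ (shiftZ i ξ) - φ (shiftZ i η)) := by
  rw [← Finset.map_add_right_Icc, Finset.sum_map]
  simp only [rhoN, shiftZ_shiftZ, addRightEmbedding_apply]

theorem rhoN_add (φ : Conf E → ℝ) (ξ ζ η : Conf E) :
    rhoN φ ξ η = rhoN φ ξ ζ + rhoN φ ζ η := by
  funext n
  simp only [rhoN, Pi.add_apply, ← Finset.sum_add_distrib, sub_add_sub_cancel]

theorem FinDiff.tendsto_sub_shiftZ [Finite E] [TopologicalSpace E] [DiscreteTopology E]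
    {φ : Conf E → ℝ} (hφ : Continuous φ) {ξ η : Conf E} (h : FinDiff ξ η) :
    Tendsto (fun j => φ (shiftZ j ξ) - φ (shiftZ j η)) cofinite (𝓝 0) := by
  rw [Metric.tendsto_nhds]
  intro ε hε
  obtain ⟨S, hS⟩ := exists_finset_forall_dist_lt hφ hε
  have hbad : (⋃ m ∈ S, (· - m) '' {k | ξ k ≠ η k}).Finite :=
    S.finite_toSet.biUnion fun m _ => h.image _
  refine eventually_cofinite.2 (hbad.subset fun j hj => ?_)
  by_contra hgood
  simp only [Set.mem_iUnion, Set.mem_image, not_exists, not_and] at hgood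
  have hclose := hS (shiftZ j ξ) (shiftZ j η) fun m hm =>
    not_not.1 fun hne => hgood m hm _ hne (add_sub_cancel_left m j)
  exact hj (by simpa [Real.dist_eq] using hclose)

theorem tendsto_rhoN_shiftZ [Finite E] [TopologicalSpace E] [DiscreteTopology E]
    {φ : Conf E → ℝ} (hφ : Continuous φ) {ξ η : Conf E} (h : FinDiff ξ η) {L : ℝ}
    (hL : Tendsto (rhoN φ ξ η) atTop (𝓝 L)) (k : ℤ) :
    Tendsto (rhoN φ (shiftZ k ξ) (shiftZ k η)) atTop (𝓝 L) := by
  simpa only [← rhoN_shiftZ] using tendsto_sum_Icc_add (h.tendsto_sub_shiftZ hφ) hL k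

theorem Extensible.tendsto_rhoN_update [Finite E] [TopologicalSpace E] [DiscreteTopology E]
    {φ : Conf E → ℝ} (hφe : Extensible φ) (hφc : Continuous φ) (η : Conf E) (k : ℤ) (b : E) :
    ∃ L, Tendsto (rhoN φ (Function.update η k b) η) atTop (𝓝 L) := by
  set ω := shiftZ k η
  obtain ⟨r, hr⟩ := hφe (ω 0) b
  have hL : Tendsto (rhoN φ (upd0 ω b) ω) atTop (𝓝 (r ω)) := by
    simpa only [upd0, Function.update_eq_self] using hr.tendsto_at ω
  have hdiff : FinDiff (upd0 ω b) ω := (Set.finite_singleton 0).subset fun j hj => by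
    by_contra hj0
    exact hj (Function.update_of_ne hj0 _ _)
  refine ⟨r ω, ?_⟩
  simpa [ω, upd0, shiftZ_update, shiftZ_shiftZ] using tendsto_rhoN_shiftZ hφc hdiff hL (-k)

theorem Extensible.tendsto_rhoN_of_eqOn_compl [Finite E] [TopologicalSpace E]
    [DiscreteTopology E] {φ : Conf E → ℝ} (hφe : Extensible φ) (hφc : Continuous φ)
    (D : Finset ℤ) (ξ η : Conf E) (h : ∀ k ∉ D, ξ k = η k) :
    ∃ L, Tendsto (rhoN φ ξ η) atTop (𝓝 L) := by
  induction D using Finset.induction_on generalizing ξ with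
  | empty =>
    obtain rfl : ξ = η := funext fun k => h k (Finset.notMem_empty k)
    exact ⟨0, tendsto_const_nhds.congr fun n => by simp [rhoN]⟩
  | insert a D _ ih =>
    set ζ := Function.update ξ a (η a) with hζ
    obtain ⟨L₁, h₁⟩ := hφe.tendsto_rhoN_update hφc ζ a (ξ a)
    rw [Function.update_idem, Function.update_eq_self] at h₁
    obtain ⟨L₂, h₂⟩ := ih ζ fun k hk => by
      by_cases hka : k = a
      · rw [hζ, hka, Function.update_self]
      · rw [hζ, Function.update_of_ne hka]
        exact h k (by simp [hka, hk])
    exact ⟨L₁ + L₂, rhoN_add φ ξ ζ η ▸ h₁.add h₂⟩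

theorem rhoN_converges_of_extensible_general [Fintype E] [TopologicalSpace E] [DiscreteTopology E]
    (φ : Conf E → ℝ) (hφc : Continuous φ) (hφe : Extensible φ)
    (ξ η : Conf E) (h : FinDiff ξ η) :
    ∃ L : ℝ, Tendsto (rhoN φ ξ η) atTop (𝓝 L) :=
  hφe.tendsto_rhoN_of_eqOn_compl hφc h.toFinset ξ η fun _ hk =>
    not_not.1 fun hne => hk (h.mem_toFinset.2 hne)

/-- If `φ` is continuous with the extensibility property and `ξ, η`
differ in at most finitely many coordinates, then
`ρ_n(ξ,η) = ∑_{i=-n}^{n} (φ(S^i ξ) - φ(S^i η))` converges as `n → ∞`. -/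
theorem rhoN_converges_of_extensible [Fintype E] [Nonempty E] [TopologicalSpace E] [DiscreteTopology E]
    [MeasurableSpace E] [MeasurableSingletonClass E]
    (φ : Conf E → ℝ) (hφc : Continuous φ) (hφe : Extensible φ)
    (ξ η : Conf E) (h : FinDiff ξ η) :
    ∃ L : ℝ, Tendsto (rhoN φ ξ η) atTop (𝓝 L) :=
  rhoN_converges_of_extensible_general φ hφc hφe ξ η h

end GP
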